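/- arXiv:2408.01624 — 2 statements merged into one kernel-verified Lean document; each statement's English description precedes it below -/
import Mathlib

section
/- Let $s \geq 1$, $\mu \in (0,1)$, $m_0 \in [-1,1]$, and let $h : [0,\infty) \times (\mathbb{R}\setminus\{0\}) \to \mathbb{C}$ be a family of bounded functions, differentiable in $t$, satisfying $\frac{d}{dt} h_t(\xi) + h_t(\xi) = (\cos(\mu\xi) - i m_0 \sin(\mu\xi)) (1-\mu)^s h_t((1-\mu)\xi)$ for all $t \geq 0$ and $\xi \neq 0$, with $t \mapsto \|h_t\|_\infty$ continuous. Then $\|h_t\|_\infty \leq \|h_0\|_\infty e^{-(1 - (1-\mu)^s) t}$ for all $t \geq 0$. -/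
/-!
Multiplying by `e^t` absorbs the damping term: `e^t h_t(ξ)` has derivative
`e^t c(ξ) (1-μ)^s h_t((1-μ)ξ)` with `|c(ξ)| ≤ 1`, so integrating and taking the supremum over `ξ`
gives `e^t H(t) ≤ H(0) + (1-μ)^s ∫₀ᵗ e^τ H(τ) dτ`. Grönwall's inequality then yields
`e^t H(t) ≤ H(0) e^{(1-μ)^s t}`.
-/

open Real Filter

theorem Complex.norm_ofReal_cos_sub_I_mul_ofReal_sin_le_one (x : ℝ) {m : ℝ}
    (hm : m ∈ Set.Icc (-1 : ℝ) 1) :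
    ‖(Real.cos x : ℂ) - Complex.I * (m : ℂ) * (Real.sin x : ℂ)‖ ≤ 1 := by
  have hm2 : m ^ 2 ≤ 1 := by nlinarith [hm.1, hm.2]
  have hnorm_sq : ‖(Real.cos x : ℂ) - Complex.I * (m : ℂ) * (Real.sin x : ℂ)‖ ^ 2
      = Real.cos x ^ 2 + m ^ 2 * Real.sin x ^ 2 := by
    rw [Complex.sq_norm, Complex.normSq_apply]
    simp only [Complex.sub_re, Complex.sub_im, Complex.mul_re, Complex.mul_im, Complex.I_re,
      Complex.I_im, Complex.ofReal_re, Complex.ofReal_im]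
    ring
  refine (sq_le_one_iff₀ (norm_nonneg _)).1 ?_
  rw [hnorm_sq]
  nlinarith [Real.sin_sq_add_cos_sq x, mul_nonneg (sub_nonneg.2 hm2) (sq_nonneg (Real.sin x))]

theorem le_mul_exp_of_le_add_mul_integral {F : ℝ → ℝ} (hF : Continuous F) {C a : ℝ}
    (ha : 0 ≤ a) (hle : ∀ u, 0 ≤ u → F u ≤ C + a * ∫ τ in (0 : ℝ)..u, F τ)
    {t : ℝ} (ht : 0 ≤ t) : F t ≤ C * exp (a * t) := by
  set G : ℝ → ℝ := fun u => C + a * ∫ τ in (0 : ℝ)..u, F τ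
  have hG : ∀ u, HasDerivAt G (a * F u) u := fun u =>
    ((intervalIntegral.integral_hasDerivAt_right (hF.intervalIntegrable _ _)
      (hF.stronglyMeasurableAtFilter _ _) hF.continuousAt).const_mul a).const_add C
  have hG_le : G t ≤ gronwallBound C a 0 (t - 0) :=
    le_gronwallBound_of_liminf_deriv_right_le
      (continuousOn_of_forall_continuousAt fun u _ => (hG u).continuousAt)
      (fun u _ _ hr => (hG u).hasDerivWithinAt.liminf_right_slope_le hr)
      (by simp [G]) (fun u hu => by simpa using mul_le_mul_of_nonneg_left (hle u hu.1) ha)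
      t ⟨ht, le_rfl⟩
  rw [sub_zero, gronwallBound_ε0] at hG_le
  exact (hle t ht).trans hG_le

theorem exp_mul_norm_le_norm_add_integral_of_hasDerivAt_sub_self
    {E : Type*} [NormedAddCommGroup E] [NormedSpace ℝ E] {y k : ℝ → E} {B : ℝ → ℝ} {u : ℝ}
    (hu : 0 ≤ u) (hy : ∀ τ ∈ Set.Icc 0 u, HasDerivAt y (k τ - y τ) τ)
    (hk : ∀ τ ∈ Set.Ioo 0 u, ‖k τ‖ ≤ B τ) (hB : IntervalIntegrable B MeasureTheory.volume 0 u) :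
    exp u * ‖y u‖ ≤ ‖y 0‖ + ∫ τ in (0 : ℝ)..u, exp τ * B τ := by
  set f : ℝ → E := fun τ => exp τ • y τ
  have hf : ∀ τ ∈ Set.Icc 0 u, HasDerivAt f (exp τ • k τ) τ := fun τ hτ =>
    ((hasDerivAt_exp τ).smul (hy τ hτ)).congr_deriv (by rw [smul_sub, sub_add_cancel])
  have hf_sub : ‖f u - f 0‖ ≤ ∫ τ in (0 : ℝ)..u, exp τ * B τ := by
    refine norm_sub_le_integral_of_norm_deriv_le_of_le hu
      (continuousOn_of_forall_continuousAt fun τ hτ => (hf τ hτ).continuousAt)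
      (fun τ hτ => (hf τ (Set.Ioo_subset_Icc_self hτ)).differentiableAt.differentiableWithinAt)
      (MeasureTheory.ae_of_all _ fun τ hτ => ?_) (hB.continuousOn_mul continuous_exp.continuousOn)
    rw [(hf τ (Set.Ioo_subset_Icc_self hτ)).deriv, norm_smul, norm_of_nonneg (exp_pos τ).le]
    exact mul_le_mul_of_nonneg_left (hk τ hτ) (exp_pos τ).le
  have hfu : ‖f u‖ = exp u * ‖y u‖ := by
    rw [norm_smul, norm_of_nonneg (exp_pos u).le]
  have hf0 : f 0 = y 0 := by simp [f]
  calc exp u * ‖y u‖ = ‖f u‖ := hfu.symm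
    _ ≤ ‖f 0‖ + ‖f u - f 0‖ := norm_le_norm_add_norm_sub' _ _
    _ ≤ ‖y 0‖ + ∫ τ in (0 : ℝ)..u, exp τ * B τ := by rw [← hf0]; gcongr

theorem stmt_5_general (s : ℝ) (μ : ℝ) (hμ : μ ∈ Set.Ioo (0:ℝ) 1)
    (m0 : ℝ) (hm0 : m0 ∈ Set.Icc (-1:ℝ) 1)
    (h : ℝ → ℝ → ℂ) (H : ℝ → ℝ) (hHcont : Continuous H)
    (hH : ∀ t, IsLUB {r | ∃ ξ : ℝ, ξ ≠ 0 ∧ r = ‖h t ξ‖} (H t))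
    (hode : ∀ t, 0 ≤ t → ∀ ξ : ℝ, ξ ≠ 0 →
      HasDerivAt (fun τ => h τ ξ)
        (((Real.cos (μ * ξ) : ℂ) - Complex.I * (m0 : ℂ) * (Real.sin (μ * ξ) : ℂ))
            * (((1 - μ) ^ s : ℝ) : ℂ) * h t ((1 - μ) * ξ) - h t ξ) t) :
    ∀ t, 0 ≤ t → H t ≤ H 0 * Real.exp (-(1 - (1 - μ) ^ s) * t) := by
  intro t ht
  obtain ⟨hμ0, hμ1⟩ := hμ
  set a : ℝ := (1 - μ) ^ s
  have ha : 0 ≤ a := rpow_nonneg (by linarith) s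
  have hH_ge : ∀ u ξ, ξ ≠ 0 → ‖h u ξ‖ ≤ H u := fun u ξ hξ => (hH u).1 ⟨ξ, hξ, rfl⟩
  have hsup : ∀ u, 0 ≤ u → exp u * H u ≤ H 0 + a * ∫ τ in (0 : ℝ)..u, exp τ * H τ := by
    intro u hu
    rw [← le_div_iff₀' (exp_pos u)]
    refine (hH u).2 ?_
    rintro _ ⟨ξ, hξ, rfl⟩
    rw [le_div_iff₀' (exp_pos u)]
    have hξ' : (1 - μ) * ξ ≠ 0 := mul_ne_zero (by linarith) hξ
    have hduhamel := exp_mul_norm_le_norm_add_integral_of_hasDerivAt_sub_self (B := fun τ => a * H τ)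
      hu (fun τ hτ => hode τ hτ.1 ξ hξ) (fun τ _ => ?_) ((hHcont.const_mul a).intervalIntegrable 0 u)
    · simp_rw [mul_left_comm (exp _) a, intervalIntegral.integral_const_mul] at hduhamel
      linarith [hH_ge 0 ξ hξ]
    · rw [norm_mul, norm_mul, Complex.norm_real, norm_of_nonneg ha, ← one_mul (a * H τ),
        ← mul_assoc]
      gcongr
      exacts [Complex.norm_ofReal_cos_sub_I_mul_ofReal_sin_le_one _ hm0, hH_ge τ _ hξ']
  have hgronwall : exp t * H t ≤ H 0 * exp (a * t) :=
    le_mul_exp_of_le_add_mul_integral (continuous_exp.mul hHcont) ha hsup ht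
  calc H t = exp (-t) * (exp t * H t) := by rw [← mul_assoc, ← exp_add]; simp
    _ ≤ exp (-t) * (H 0 * exp (a * t)) := by gcongr
    _ = H 0 * exp (-(1 - a) * t) := by rw [mul_left_comm, ← exp_add]; ring_nf

theorem stmt_5 (s : ℝ) (hs : 1 ≤ s) (μ : ℝ) (hμ : μ ∈ Set.Ioo (0:ℝ) 1)
    (m0 : ℝ) (hm0 : m0 ∈ Set.Icc (-1:ℝ) 1)
    (h : ℝ → ℝ → ℂ) (H : ℝ → ℝ) (hHcont : Continuous H)
    (hH : ∀ t, IsLUB {r | ∃ ξ : ℝ, ξ ≠ 0 ∧ r = ‖h t ξ‖} (H t))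
    (hode : ∀ t, 0 ≤ t → ∀ ξ : ℝ, ξ ≠ 0 →
      HasDerivAt (fun τ => h τ ξ)
        (((Real.cos (μ * ξ) : ℂ) - Complex.I * (m0 : ℂ) * (Real.sin (μ * ξ) : ℂ))
            * (((1 - μ) ^ s : ℝ) : ℂ) * h t ((1 - μ) * ξ) - h t ξ) t) :
    ∀ t, 0 ≤ t → H t ≤ H 0 * Real.exp (-(1 - (1 - μ) ^ s) * t) :=
  stmt_5_general s μ hμ m0 hm0 h H hHcont hH hode
end

section
/- Let $\mu = 1 - 1/\sqrt{2}$ and $r = 4\mu - 1 = 3 - 2\sqrt{2}$. Define the density $\rho_\infty$ on $[-1,1]$ by $\rho_\infty(x) = \frac{1}{1+r}\frac{1+x}{1-r}$ for $-1 \leq x \leq -r$, $\rho_\infty(x) = \frac{1}{1+r}$ for $-r \leq x \leq r$, and $\rho_\infty(x) = \frac{1}{1+r}\frac{1-x}{1-r}$ for $r \leq x \leq 1$. Then $\rho_\infty$ is a probability density, and if $Z$ has density $\rho_\infty$ and $\mathcal{B}$ is an independent symmetric Rademacher variable, then $(1-\mu)Z + \mu\mathcal{B}$ also has density $\rho_\infty$.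 -/
open MeasureTheory ProbabilityTheory

/-- The symmetric Rademacher distribution: mass `1/2` at each of `1` and `-1`. -/
noncomputable def symRadMeasure : Measure ℝ :=
  (2:ENNReal)⁻¹ • Measure.dirac 1 + (2:ENNReal)⁻¹ • Measure.dirac (-1)

/-- The parameter `r = 3 - 2√2 = 4μ - 1` for `μ = 1 - 1/√2`. -/
noncomputable def rPar : ℝ := 3 - 2 * Real.sqrt 2

/-- The volcano-shaped density on `[-1,1]` (extended by `0` outside). -/
noncomputable def rhoInf (x : ℝ) : ℝ :=
  if x < -1 ∨ 1 < x then 0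
  else if x ≤ -rPar then 1 / (1 + rPar) * ((1 + x) / (1 - rPar))
  else if x ≤ rPar then 1 / (1 + rPar)
  else 1 / (1 + rPar) * ((1 - x) / (1 - rPar))

/-!
Up to the factor `((1 + r) * (1 - r))⁻¹`, `ρ∞` is the trapezoid
`(x + 1)₊ - (x + r)₊ - (x - r)₊ + (x - 1)₊`. Since `1 - μ = 1 / √2`, each of the two branches of
the stationarity equation turns these four hinges into `√2` times four hinges in `x`. For
`r = 3 - 2√2` the hinges with kinks at `±(√2 - 1)` cancel between the two branches, and the four
that remain are those of the trapezoid. On the probabilistic side, the law of `(1 - μ) Z + μ B` is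
the convolution of the law of `(1 - μ) Z` with `(δ_μ + δ_{-μ}) / 2`, whose density is the average of
two translates of the rescaled density of `Z`.
-/

open scoped ENNReal

lemma map_withDensity_comp {α β : Type*} [MeasurableSpace α] [MeasurableSpace β] {φ : α → β}
    (hφ : Measurable φ) {g : β → ℝ≥0∞} (hg : Measurable g) (μ : Measure α) :
    (μ.withDensity (g ∘ φ)).map φ = (μ.map φ).withDensity g := by
  ext s hs
  rw [Measure.map_apply hφ hs, withDensity_apply _ (hφ hs), withDensity_apply _ hs,
    Measure.restrict_map hφ hs, lintegral_map hg hφ, Function.comp_def]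

lemma map_mul_add_withDensity_volume {c : ℝ} (hc : 0 < c) (d : ℝ) {f : ℝ → ℝ≥0∞}
    (hf : Measurable f) :
    (volume.withDensity f).map (fun x ↦ c * x + d) =
      ENNReal.ofReal c⁻¹ • volume.withDensity fun y ↦ f ((y - d) / c) := by
  have hf_eq : f = (fun y ↦ f ((y - d) / c)) ∘ fun x ↦ c * x + d := by
    ext x
    simp [hc.ne']
  have hvol : volume.map (fun x : ℝ ↦ c * x + d) = ENNReal.ofReal c⁻¹ • volume := by
    rw [show (fun x : ℝ ↦ c * x + d) = (· + d) ∘ (c * ·) from rfl,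
      ← Measure.map_map (measurable_add_const d) (measurable_const_mul c),
      Real.map_volume_mul_left hc.ne', Measure.map_smul, map_add_right_eq_self,
      abs_of_pos (inv_pos.mpr hc)]
  conv_lhs => rw [hf_eq]
  rw [map_withDensity_comp (g := fun y ↦ f ((y - d) / c)) (by fun_prop) (hf.comp (by fun_prop)),
    hvol, withDensity_smul_measure]

lemma ProbabilityTheory.hasLaw_of_map_eq {Ω 𝓧 : Type*} [MeasurableSpace Ω] [MeasurableSpace 𝓧]
    {P : Measure Ω} {X : Ω → 𝓧} {ν : Measure 𝓧} [NeZero ν] (h : P.map X = ν) : HasLaw X ν P :=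
  ⟨.of_map_ne_zero (h ▸ NeZero.ne ν), h⟩

lemma map_mul_symRadMeasure (m : ℝ) :
    symRadMeasure.map (m * ·) =
      (2 : ℝ≥0∞)⁻¹ • Measure.dirac m + (2 : ℝ≥0∞)⁻¹ • Measure.dirac (-m) := by
  simp [symRadMeasure, Measure.map_add _ _ (measurable_const_mul m), Measure.map_smul,
    Measure.map_dirac' (measurable_const_mul m)]

instance isProbabilityMeasure_symRadMeasure : IsProbabilityMeasure symRadMeasure :=
  ⟨by simp [symRadMeasure, ENNReal.inv_two_add_inv_two]⟩

theorem ProbabilityTheory.IndepFun.hasLaw_mul_add_mul_symRad {Ω : Type*} [MeasurableSpace Ω]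
    {P : Measure Ω} {Z B : Ω → ℝ} {f : ℝ → ℝ≥0∞} (hf : Measurable f)
    [IsFiniteMeasure (volume.withDensity f)] (hZ : HasLaw Z (volume.withDensity f) P)
    (hB : HasLaw B symRadMeasure P) (hZB : IndepFun Z B P) {c : ℝ} (hc : 0 < c) (m : ℝ) :
    HasLaw (fun ω ↦ c * Z ω + m * B ω)
      (volume.withDensity fun y ↦ (f ((y - m) / c) + f ((y + m) / c)) / ENNReal.ofReal (2 * c))
      P := by
  have hcZ : HasLaw (fun ω ↦ c * Z ω) ((volume.withDensity f).map (c * ·)) P :=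
    HasLaw.fun_comp ⟨by fun_prop, rfl⟩ hZ
  have hmB : HasLaw (fun ω ↦ m * B ω) (symRadMeasure.map (m * ·)) P :=
    HasLaw.fun_comp ⟨by fun_prop, rfl⟩ hB
  have hsum := (hZB.comp (measurable_const_mul c) (measurable_const_mul m)).hasLaw_fun_add hcZ hmB
  refine ⟨hsum.aemeasurable, hsum.map_eq.trans ?_⟩
  rw [map_mul_symRadMeasure, Measure.conv_add, Measure.conv_smul_right, Measure.conv_smul_right,
    Measure.conv_dirac, Measure.conv_dirac, Measure.map_map (by fun_prop) (by fun_prop),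
    Measure.map_map (by fun_prop) (by fun_prop)]
  simp only [Function.comp_def]
  rw [map_mul_add_withDensity_volume hc m hf, map_mul_add_withDensity_volume hc (-m) hf,
    smul_smul, smul_smul, ← withDensity_smul' _ _ (by finiteness),
    ← withDensity_smul' _ _ (by finiteness), ← withDensity_add_left (by fun_prop)]
  congr 1
  ext y
  have hinv : (ENNReal.ofReal (2 * c))⁻¹ = 2⁻¹ * ENNReal.ofReal c⁻¹ := by
    rw [← ENNReal.ofReal_inv_of_pos (by positivity), mul_inv, ENNReal.ofReal_mul (by norm_num),
      ENNReal.ofReal_inv_of_pos two_pos, ENNReal.ofReal_ofNat]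
  simp only [Pi.add_apply, Pi.smul_apply, smul_eq_mul, sub_neg_eq_add, ENNReal.div_eq_inv_mul,
    hinv, mul_add]

lemma rPar_pos : 0 < rPar := by
  have := Real.sqrt_lt' (by norm_num : (0:ℝ) < 3 / 2) |>.mpr (by norm_num : (2:ℝ) < (3 / 2) ^ 2)
  unfold rPar; linarith

lemma rPar_lt_one : rPar < 1 := by
  have := Real.lt_sqrt (by norm_num : (0:ℝ) ≤ 1) |>.mpr (by norm_num : (1:ℝ) ^ 2 < 2)
  unfold rPar; linarith

noncomputable def trapezoid (x : ℝ) : ℝ :=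
  max (x + 1) 0 - max (x + rPar) 0 - max (x - rPar) 0 + max (x - 1) 0

lemma rhoInf_eq_trapezoid (x : ℝ) : rhoInf x = trapezoid x / ((1 + rPar) * (1 - rPar)) := by
  have := rPar_pos
  have := rPar_lt_one
  have : 0 < 1 - rPar := by linarith
  unfold rhoInf trapezoid
  split_ifs with hout hl hm
  · rcases hout with h | h
    · rw [max_eq_right (by linarith), max_eq_right (by linarith), max_eq_right (by linarith),
        max_eq_right (by linarith)]; simp
    · rw [max_eq_left (by linarith), max_eq_left (by linarith), max_eq_left (by linarith),
        max_eq_left (by linarith)]; ring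
  · push Not at hout
    rw [max_eq_left (by linarith), max_eq_right (by linarith), max_eq_right (by linarith),
        max_eq_right (by linarith)]; field_simp; ring
  · rw [max_eq_left (by linarith), max_eq_left (by linarith), max_eq_right (by linarith),
        max_eq_right (by linarith)]; field_simp; ring
  · push Not at hout
    rw [max_eq_left (by linarith), max_eq_left (by linarith), max_eq_left (by linarith),
        max_eq_right (by linarith)]; field_simp; ring

lemma trapezoid_add_trapezoid (x : ℝ) :
    trapezoid (√2 * x - (√2 - 1)) + trapezoid (√2 * x + (√2 - 1)) = √2 * trapezoid x := by
  have hr : rPar = 3 - 2 * √2 := rfl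
  have hs : √2 ^ 2 = 2 := Real.sq_sqrt (by norm_num)
  have hinge (y z : ℝ) (h : y = √2 * z) : max y 0 = √2 * max z 0 := by
    rw [h, mul_max_of_nonneg _ _ (Real.sqrt_nonneg 2), mul_zero]
  unfold trapezoid
  rw [hinge (√2 * x - (√2 - 1) + 1) (x + (√2 - 1)) (by linear_combination -hs),
    hinge (√2 * x - (√2 - 1) + rPar) (x - rPar) (by linear_combination (1 + √2) * hr - 2 * hs),
    hinge (√2 * x - (√2 - 1) - rPar) (x + (1 - √2)) (by linear_combination -hr + hs),
    hinge (√2 * x - (√2 - 1) - 1) (x - 1) (by ring),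
    hinge (√2 * x + (√2 - 1) + 1) (x + 1) (by ring),
    hinge (√2 * x + (√2 - 1) + rPar) (x + (√2 - 1)) (by linear_combination hr - hs),
    hinge (√2 * x + (√2 - 1) - rPar) (x + rPar) (by linear_combination (-1 - √2) * hr + 2 * hs),
    hinge (√2 * x + (√2 - 1) - 1) (x + (1 - √2)) (by linear_combination hs)]
  ring

lemma rhoInf_stationary {μ : ℝ} (hμ : μ = 1 - 1 / √2) (x : ℝ) :
    (rhoInf ((x - μ) / (1 - μ)) + rhoInf ((x + μ) / (1 - μ))) / (2 * (1 - μ)) = rhoInf x := by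
  have hs : √2 ^ 2 = 2 := Real.sq_sqrt (by norm_num)
  have hs0 : √2 ≠ 0 := by positivity
  have hc : 1 - μ = (√2)⁻¹ := by rw [hμ]; ring
  have hminus : (x - μ) / (1 - μ) = √2 * x - (√2 - 1) := by
    rw [hc, hμ]; field_simp
  have hplus : (x + μ) / (1 - μ) = √2 * x + (√2 - 1) := by
    rw [hc, hμ]; field_simp
  have htwo : 2 * (1 - μ) = √2 := by
    rw [hc]; field_simp; exact hs.symm
  rw [hminus, hplus, htwo, rhoInf_eq_trapezoid, rhoInf_eq_trapezoid, rhoInf_eq_trapezoid,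
    ← add_div, trapezoid_add_trapezoid]
  field_simp

lemma continuous_rhoInf : Continuous rhoInf := by
  simp only [funext rhoInf_eq_trapezoid, trapezoid]
  fun_prop

lemma rhoInf_nonneg (x : ℝ) : 0 ≤ rhoInf x := by
  have := rPar_pos
  have : 0 < 1 - rPar := by linarith [rPar_lt_one]
  unfold rhoInf
  split_ifs with hout
  · rfl
  all_goals
    push Not at hout
    have : 0 ≤ 1 + x := by linarith
    have : 0 ≤ 1 - x := by linarith
    positivity

lemma rhoInf_eq_of_mem_Icc_left {x : ℝ} (hx : x ∈ Set.Icc (-1) (-rPar)) :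
    rhoInf x = (1 + x) / ((1 + rPar) * (1 - rPar)) := by
  obtain ⟨h₁, h₂⟩ := hx
  have := rPar_pos
  rw [rhoInf_eq_trapezoid, trapezoid, max_eq_left (by linarith), max_eq_right (by linarith),
    max_eq_right (by linarith), max_eq_right (by linarith)]
  ring

lemma rhoInf_eq_of_mem_Icc_middle {x : ℝ} (hx : x ∈ Set.Icc (-rPar) rPar) :
    rhoInf x = 1 / (1 + rPar) := by
  obtain ⟨h₁, h₂⟩ := hx
  have := rPar_pos
  have := rPar_lt_one
  have : 1 - rPar ≠ 0 := by linarith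
  rw [rhoInf_eq_trapezoid, trapezoid, max_eq_left (by linarith), max_eq_left (by linarith),
    max_eq_right (by linarith), max_eq_right (by linarith)]
  field_simp
  ring

lemma rhoInf_eq_of_mem_Icc_right {x : ℝ} (hx : x ∈ Set.Icc rPar 1) :
    rhoInf x = (1 - x) / ((1 + rPar) * (1 - rPar)) := by
  obtain ⟨h₁, h₂⟩ := hx
  have := rPar_pos
  rw [rhoInf_eq_trapezoid, trapezoid, max_eq_left (by linarith), max_eq_left (by linarith),
    max_eq_left (by linarith), max_eq_right (by linarith)]
  ring

lemma integral_rhoInf : ∫ x, rhoInf x = 1 := by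
  have := rPar_pos
  have := rPar_lt_one
  have : 1 - rPar ≠ 0 := by linarith
  have : 1 + rPar ≠ 0 := by linarith
  have hint (a b : ℝ) : IntervalIntegrable rhoInf volume a b :=
    continuous_rhoInf.intervalIntegrable a b
  have hleft : ∫ x in (-1)..(-rPar), rhoInf x
      = ∫ x in (-1)..(-rPar), (1 + x) / ((1 + rPar) * (1 - rPar)) :=
    intervalIntegral.integral_congr fun x hx ↦ by
      rw [Set.uIcc_of_le (by linarith)] at hx
      exact rhoInf_eq_of_mem_Icc_left hx
  have hmid : ∫ x in (-rPar)..rPar, rhoInf x = ∫ x in (-rPar)..rPar, 1 / (1 + rPar) :=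
    intervalIntegral.integral_congr fun x hx ↦ by
      rw [Set.uIcc_of_le (by linarith)] at hx
      exact rhoInf_eq_of_mem_Icc_middle hx
  have hright : ∫ x in rPar..1, rhoInf x = ∫ x in rPar..1, (1 - x) / ((1 + rPar) * (1 - rPar)) :=
    intervalIntegral.integral_congr fun x hx ↦ by
      rw [Set.uIcc_of_le (by linarith)] at hx
      exact rhoInf_eq_of_mem_Icc_right hx
  have hsupp : ∀ x ∉ Set.Icc (-1) 1, rhoInf x = 0 := fun x hx ↦ by
    rw [Set.mem_Icc, not_and_or, not_le, not_le] at hx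
    exact if_pos hx
  rw [← setIntegral_eq_integral_of_forall_compl_eq_zero hsupp, integral_Icc_eq_integral_Ioc,
    ← intervalIntegral.integral_of_le (by norm_num),
    ← intervalIntegral.integral_add_adjacent_intervals (hint (-1) (-rPar)) (hint (-rPar) 1),
    ← intervalIntegral.integral_add_adjacent_intervals (hint (-rPar) rPar) (hint rPar 1),
    hleft, hmid, hright]
  simp [intervalIntegral.integral_comp_add_left (fun x ↦ x),
    intervalIntegral.integral_comp_sub_left (fun x ↦ x)]
  field_simp
  ring

instance isProbabilityMeasure_withDensity_rhoInf :
    IsProbabilityMeasure (volume.withDensity fun x ↦ ENNReal.ofReal (rhoInf x)) := by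
  constructor
  rw [withDensity_apply _ MeasurableSet.univ, Measure.restrict_univ,
    ← ofReal_integral_eq_lintegral_ofReal (.of_integral_ne_zero (by simp [integral_rhoInf]))
      (ae_of_all _ rhoInf_nonneg), integral_rhoInf, ENNReal.ofReal_one]

theorem stmt_17_general {Ω : Type*} [MeasurableSpace Ω] (P : Measure Ω)
    (μ : ℝ) (hμ : μ = 1 - 1 / Real.sqrt 2)
    (Z B : Ω → ℝ)
    (hZ : Measure.map Z P = volume.withDensity (fun x => ENNReal.ofReal (rhoInf x)))
    (hB : Measure.map B P = symRadMeasure) (hindep : IndepFun Z B P) :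
    (∀ x, 0 ≤ rhoInf x) ∧ (∫ x, rhoInf x) = 1 ∧
      Measure.map (fun ω => (1 - μ) * Z ω + μ * B ω) P
        = volume.withDensity (fun x => ENNReal.ofReal (rhoInf x)) := by
  refine ⟨rhoInf_nonneg, integral_rhoInf, ?_⟩
  have hc : 0 < 1 - μ := by
    rw [hμ, sub_sub_cancel]
    positivity
  rw [(hindep.hasLaw_mul_add_mul_symRad continuous_rhoInf.measurable.ennreal_ofReal
    (hasLaw_of_map_eq hZ) (hasLaw_of_map_eq hB) hc μ).map_eq]
  congr 1
  ext x
  rw [← rhoInf_stationary hμ x, ENNReal.ofReal_div_of_pos (by positivity),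
    ENNReal.ofReal_add (rhoInf_nonneg _) (rhoInf_nonneg _)]

theorem stmt_17 {Ω : Type*} [MeasurableSpace Ω] (P : Measure Ω) [IsProbabilityMeasure P]
    (μ : ℝ) (hμ : μ = 1 - 1 / Real.sqrt 2) (hr : rPar = 4 * μ - 1)
    (Z B : Ω → ℝ) (hZmeas : Measurable Z) (hBmeas : Measurable B)
    (hZ : Measure.map Z P = volume.withDensity (fun x => ENNReal.ofReal (rhoInf x)))
    (hB : Measure.map B P = symRadMeasure) (hindep : IndepFun Z B P) :
    (∀ x, 0 ≤ rhoInf x) ∧ (∫ x, rhoInf x) = 1 ∧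
      Measure.map (fun ω => (1 - μ) * Z ω + μ * B ω) P
        = volume.withDensity (fun x => ENNReal.ofReal (rhoInf x)) :=
  stmt_17_general P μ hμ Z B hZ hB hindep
end
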